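/- Let N = [[1,1,0,0],[0,1,0,0],[0,0,1,1],[0,0,0,1]] and let Q = [[q₁,q₂,q₃,q₄],[q₂,q₅,q₆,q₇],[q₃,q₆,q₈,q₉],[q₄,q₇,q₉,q₁₀]] be an arbitrary real symmetric 4×4 matrix. Set g(r) = σ₂(exp(J₄ Q r)·N) and h(r) = σ₁(exp(J₄ Q r)·N)²/4 + 2. Then: (a) g′(0) = h′(0) for every such Q; (b) g″(0) ≤ h″(0), with equality if and only if q₃ = 0 and q₁ = q₈; (c) if q₃ = 0, q₁ = q₈, q₁ > 0 and q₄ ≠ q₆, then g‴(0) > h‴(0), and consequently g(r) > h(r) for all sufficiently small r > 0. -/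

import Mathlib

open Matrix

noncomputable section

/-- The block-diagonal complex structure `J₄ = diag(J, J)` on `ℝ⁴`. -/
def J4 : Matrix (Fin 4) (Fin 4) ℝ :=
  !![0, -1, 0, 0; 1, 0, 0, 0; 0, 0, 0, -1; 0, 0, 1, 0]

/-- The first symmetric function of the eigenvalues: `σ₁(M) = tr M`. -/
def sigma1 (M : Matrix (Fin 4) (Fin 4) ℝ) : ℝ := M.trace

/-- The second symmetric function of the eigenvalues: `σ₂(M) = ((tr M)² - tr(M²))/2`. -/
def sigma2 (M : Matrix (Fin 4) (Fin 4) ℝ) : ℝ := (M.trace ^ 2 - (M * M).trace) / 2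

def Nmat : Matrix (Fin 4) (Fin 4) ℝ :=
  !![1, 1, 0, 0; 0, 1, 0, 0; 0, 0, 1, 1; 0, 0, 0, 1]

/-!
Write `F(r) = exp(r A) N` with `A = J₄ Q`. Since `F' = A F`, the derivatives at `0` of `(tr F)²`
and of `tr(F²)` are Leibniz sums of the traces `tr(Aⁱ N)` and `tr(Aⁱ N Aʲ N)`, so the jets of
`g - h` at `0` are explicit polynomials in the entries of `Q`: they are `0`,
`-((q₁ - q₈)²/2 + 2 q₃²)` and, when `q₃ = 0` and `q₁ = q₈`, `6 q₁ (q₄ - q₆)²`. As `N` is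
unipotent, also `g(0) = h(0)`; so in case (c) `g - h` vanishes to third order at `0` with positive
third derivative, and is therefore positive just to the right of `0`.
-/

open NormedSpace Filter Topology Set Matrix Finset

theorem eventually_pos_of_iteratedDeriv_pos {f : ℝ → ℝ} {a : ℝ} {n : ℕ}
    (hf : ContDiff ℝ n f) (hzero : ∀ k < n, iteratedDeriv k f a = 0)
    (hpos : 0 < iteratedDeriv n f a) : ∀ᶠ x in 𝓝[>] a, 0 < f x := by
  induction n generalizing f with
  | zero =>
    rw [iteratedDeriv_zero] at hpos
    exact nhdsWithin_le_nhds (continuousAt_const.eventually_lt hf.continuous.continuousAt hpos)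
  | succ n ih =>
    have hderiv : ∀ᶠ x in 𝓝[>] a, 0 < deriv f x :=
      ih hf.deriv' (fun k hk => by rw [← iteratedDeriv_succ']; exact hzero _ (by omega))
        (by rwa [← iteratedDeriv_succ'])
    obtain ⟨b, hab, hb⟩ := mem_nhdsGT_iff_exists_Ioo_subset.1 hderiv
    have hmono : StrictMonoOn f (Icc a b) :=
      strictMonoOn_of_deriv_pos (convex_Icc a b) hf.continuous.continuousOn
        (fun x hx => hb (by rwa [interior_Icc] at hx))
    have hfa : f a = 0 := by simpa using hzero 0 (by omega)
    filter_upwards [Ioo_mem_nhdsGT hab] with x hx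
    simpa [hfa] using hmono (left_mem_Icc.2 hab.le) (Ioo_subset_Icc_self hx) hx.1

theorem eventually_lt_of_iteratedDeriv_lt {f g : ℝ → ℝ} {a : ℝ} {n : ℕ}
    (hf : ContDiff ℝ n f) (hg : ContDiff ℝ n g)
    (hagree : ∀ k < n, iteratedDeriv k f a = iteratedDeriv k g a)
    (hlt : iteratedDeriv n f a < iteratedDeriv n g a) : ∀ᶠ x in 𝓝[>] a, f x < g x := by
  have hsub : ∀ k ≤ n,
      iteratedDeriv k (fun x => g x - f x) a = iteratedDeriv k g a - iteratedDeriv k f a :=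
    fun k hk => iteratedDeriv_fun_sub (hg.of_le (by exact_mod_cast hk)).contDiffAt
      (hf.of_le (by exact_mod_cast hk)).contDiffAt
  have hpos := eventually_pos_of_iteratedDeriv_pos (a := a) (hg.sub hf)
    (fun k hk => by rw [hsub k hk.le, hagree k hk, sub_self]) (by rw [hsub n le_rfl]; linarith)
  exact hpos.mono fun x hx => sub_pos.1 hx

theorem ContinuousLinearMap.iteratedDeriv_comp_left {𝕜 E F : Type*} [NontriviallyNormedField 𝕜]
    [NormedAddCommGroup E] [NormedSpace 𝕜 E] [NormedAddCommGroup F] [NormedSpace 𝕜 F]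
    (L : E →L[𝕜] F) {f : 𝕜 → E} {x : 𝕜} {k : ℕ} (hf : ContDiffAt 𝕜 k f x) :
    iteratedDeriv k (fun t => L (f t)) x = L (iteratedDeriv k f x) := by
  simp only [iteratedDeriv_eq_iteratedFDeriv]
  rw [show (fun t => L (f t)) = L ∘ f from rfl, L.iteratedFDeriv_comp_left hf le_rfl]
  rfl

section ExpFlow

variable {𝕂 𝔸 : Type*} [RCLike 𝕂] [NormedRing 𝔸] [NormedAlgebra 𝕂 𝔸] [CompleteSpace 𝔸]

theorem contDiff_exp_smul_mul (a b : 𝔸) {n : WithTop ℕ∞} :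
    ContDiff 𝕂 n (fun t : 𝕂 => exp (t • a) * b) := by
  refine contDiff_iff_contDiffAt.2 fun t => AnalyticAt.contDiffAt ?_
  have hsmul : AnalyticAt 𝕂 (fun s : 𝕂 => s • a) t := analyticAt_id.smul analyticAt_const
  exact (AnalyticAt.comp (exp_analytic _) hsmul).mul analyticAt_const

theorem iteratedDeriv_exp_smul_mul (a b : 𝔸) (k : ℕ) :
    iteratedDeriv k (fun t : 𝕂 => exp (t • a) * b) = fun t => a ^ k * (exp (t • a) * b) := by
  induction k with
  | zero => simp
  | succ k ih =>
    funext t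
    rw [iteratedDeriv_succ, ih]
    refine (((hasDerivAt_exp_smul_const' a t).mul_const b).const_mul (a ^ k)).deriv.trans ?_
    simp only [pow_succ, mul_assoc]

end ExpFlow

section MatrixFlow

-- `exp` only depends on the topology of `Matrix n n ℝ`; any submultiplicative norm would do.
attribute [local instance] Matrix.linftyOpNormedAddCommGroup Matrix.linftyOpNormedRing
  Matrix.linftyOpNormedAlgebra

variable {n : Type*} [Fintype n]

def Matrix.traceCLM : Matrix n n ℝ →L[ℝ] ℝ :=
  LinearMap.toContinuousLinearMap (Matrix.traceLinearMap n ℝ ℝ)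

variable [DecidableEq n] (A B : Matrix n n ℝ)

theorem contDiff_trace_exp_smul_mul {m : WithTop ℕ∞} :
    ContDiff ℝ m (fun t : ℝ => trace (exp (t • A) * B)) :=
  traceCLM.contDiff.comp (contDiff_exp_smul_mul A B)

theorem contDiff_trace_exp_smul_mul_sq {m : WithTop ℕ∞} :
    ContDiff ℝ m (fun t : ℝ => trace ((exp (t • A) * B) * (exp (t • A) * B))) :=
  traceCLM.contDiff.comp ((contDiff_exp_smul_mul A B).mul (contDiff_exp_smul_mul A B))

theorem iteratedDeriv_trace_exp_smul_mul_zero (k : ℕ) :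
    iteratedDeriv k (fun t : ℝ => trace (exp (t • A) * B)) 0 = trace (A ^ k * B) := by
  have := traceCLM.iteratedDeriv_comp_left (x := 0) (k := k)
    (contDiff_exp_smul_mul (𝕂 := ℝ) A B).contDiffAt
  simp only [iteratedDeriv_exp_smul_mul, zero_smul, exp_zero, one_mul] at this
  exact this

theorem iteratedDeriv_trace_exp_smul_mul_pow_two_zero (k : ℕ) :
    iteratedDeriv k (fun t : ℝ => trace (exp (t • A) * B) ^ 2) 0 =
      ∑ i ∈ range (k + 1), k.choose i * (trace (A ^ i * B) * trace (A ^ (k - i) * B)) := by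
  simp only [pow_two]
  rw [iteratedDeriv_fun_mul (contDiff_trace_exp_smul_mul A B).contDiffAt
    (contDiff_trace_exp_smul_mul A B).contDiffAt]
  simp [iteratedDeriv_trace_exp_smul_mul_zero, mul_assoc]

theorem iteratedDeriv_trace_exp_smul_mul_sq_zero (k : ℕ) :
    iteratedDeriv k (fun t : ℝ => trace ((exp (t • A) * B) * (exp (t • A) * B))) 0 =
      ∑ i ∈ range (k + 1), k.choose i * trace (A ^ i * B * (A ^ (k - i) * B)) := by
  have := traceCLM.iteratedDeriv_comp_left (x := 0) (k := k)
    ((contDiff_exp_smul_mul (𝕂 := ℝ) A B).mul (contDiff_exp_smul_mul A B)).contDiffAt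
  rw [iteratedDeriv_fun_mul (contDiff_exp_smul_mul A B).contDiffAt
    (contDiff_exp_smul_mul A B).contDiffAt] at this
  simp only [iteratedDeriv_exp_smul_mul, zero_smul, exp_zero, one_mul] at this
  refine this.trans ?_
  change trace _ = _
  simp only [← nsmul_eq_mul, trace_sum, smul_mul_assoc, trace_smul, mul_assoc]

end MatrixFlow

def jetGap (A N : Matrix (Fin 4) (Fin 4) ℝ) (k : ℕ) : ℝ :=
  ∑ i ∈ range (k + 1), k.choose i *
    (trace (A ^ i * N) * trace (A ^ (k - i) * N) / 4 - trace (A ^ i * N * (A ^ (k - i) * N)) / 2)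

section SigmaJets

variable (A N : Matrix (Fin 4) (Fin 4) ℝ)

theorem contDiff_sigma2_exp_smul_mul {m : WithTop ℕ∞} :
    ContDiff ℝ m (fun r : ℝ => sigma2 (exp (r • A) * N)) :=
  (((contDiff_trace_exp_smul_mul A N).pow 2).sub
    (contDiff_trace_exp_smul_mul_sq A N)).div_const 2

theorem contDiff_sigma1_sq_exp_smul_mul {m : WithTop ℕ∞} :
    ContDiff ℝ m (fun r : ℝ => sigma1 (exp (r • A) * N) ^ 2 / 4 + 2) :=
  (((contDiff_trace_exp_smul_mul A N).pow 2).div_const 4).add contDiff_const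

theorem iteratedDeriv_sigma2_sub_sigma1_sq_zero {k : ℕ} (hk : k ≠ 0) :
    iteratedDeriv k (fun r : ℝ => sigma2 (exp (r • A) * N)) 0 -
      iteratedDeriv k (fun r : ℝ => sigma1 (exp (r • A) * N) ^ 2 / 4 + 2) 0 = jetGap A N k := by
  simp only [sigma2, sigma1, add_comm _ (2 : ℝ)]
  rw [iteratedDeriv_const_add (Nat.pos_of_ne_zero hk), iteratedDeriv_div_const,
    iteratedDeriv_div_const, iteratedDeriv_fun_sub
      ((contDiff_trace_exp_smul_mul A N).pow 2).contDiffAt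
      (contDiff_trace_exp_smul_mul_sq A N).contDiffAt,
    iteratedDeriv_trace_exp_smul_mul_pow_two_zero, iteratedDeriv_trace_exp_smul_mul_sq_zero]
  simp only [jetGap, mul_sub, sum_sub_distrib, mul_div_assoc', ← sum_div]
  ring

end SigmaJets

theorem sigma2_Nmat : sigma2 Nmat = sigma1 Nmat ^ 2 / 4 + 2 := by
  simp [sigma1, sigma2, Nmat, trace, Fin.sum_univ_four]
  norm_num

theorem J4_mul_symm (q₁ q₂ q₃ q₄ q₅ q₆ q₇ q₈ q₉ q₁₀ : ℝ) :
    J4 * !![q₁, q₂, q₃, q₄; q₂, q₅, q₆, q₇; q₃, q₆, q₈, q₉; q₄, q₇, q₉, q₁₀] =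
      !![-q₂, -q₅, -q₆, -q₇; q₁, q₂, q₃, q₄; -q₄, -q₇, -q₉, -q₁₀; q₃, q₆, q₈, q₉] := by
  ext i j
  fin_cases i <;> fin_cases j <;> simp [J4, mul_apply, Fin.sum_univ_four]

theorem jetGap_one (q₁ q₂ q₃ q₄ q₅ q₆ q₇ q₈ q₉ q₁₀ : ℝ) :
    jetGap (J4 * !![q₁, q₂, q₃, q₄; q₂, q₅, q₆, q₇; q₃, q₆, q₈, q₉; q₄, q₇, q₉, q₁₀]) Nmat 1 =
      0 := by
  rw [J4_mul_symm]
  simp [jetGap, sum_range_succ, trace, mul_apply, Fin.sum_univ_four, Nmat]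
  ring

theorem jetGap_two (q₁ q₂ q₃ q₄ q₅ q₆ q₇ q₈ q₉ q₁₀ : ℝ) :
    jetGap (J4 * !![q₁, q₂, q₃, q₄; q₂, q₅, q₆, q₇; q₃, q₆, q₈, q₉; q₄, q₇, q₉, q₁₀]) Nmat 2 =
      -((q₁ - q₈) ^ 2 / 2 + 2 * q₃ ^ 2) := by
  rw [J4_mul_symm]
  simp [jetGap, sum_range_succ, pow_succ, trace, mul_apply, Fin.sum_univ_four, Nmat]
  ring

theorem jetGap_three (q₁ q₂ q₄ q₅ q₆ q₇ q₉ q₁₀ : ℝ) :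
    jetGap (J4 * !![q₁, q₂, 0, q₄; q₂, q₅, q₆, q₇; 0, q₆, q₁, q₉; q₄, q₇, q₉, q₁₀]) Nmat 3 =
      6 * q₁ * (q₄ - q₆) ^ 2 := by
  rw [J4_mul_symm]
  simp [jetGap, sum_range_succ, pow_succ, trace, mul_apply, Fin.sum_univ_four, Nmat]
  ring

/-- The jet comparison of `g(r) = σ₂(exp(J₄ Q r)·N)` and
`h(r) = σ₁(exp(J₄ Q r)·N)²/4 + 2` at `r = 0` for an arbitrary symmetric `Q`. -/
theorem stmt17 (q₁ q₂ q₃ q₄ q₅ q₆ q₇ q₈ q₉ q₁₀ : ℝ)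
    (Q : Matrix (Fin 4) (Fin 4) ℝ)
    (hQ : Q = !![q₁, q₂, q₃, q₄; q₂, q₅, q₆, q₇; q₃, q₆, q₈, q₉; q₄, q₇, q₉, q₁₀])
    (g h : ℝ → ℝ)
    (hg : ∀ r, g r = sigma2 (NormedSpace.exp (r • (J4 * Q)) * Nmat))
    (hh : ∀ r, h r = sigma1 (NormedSpace.exp (r • (J4 * Q)) * Nmat) ^ 2 / 4 + 2) :
    -- (a)
    iteratedDeriv 1 g 0 = iteratedDeriv 1 h 0 ∧
    -- (b)
    (iteratedDeriv 2 g 0 ≤ iteratedDeriv 2 h 0 ∧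
      (iteratedDeriv 2 g 0 = iteratedDeriv 2 h 0 ↔ q₃ = 0 ∧ q₁ = q₈)) ∧
    -- (c)
    (q₃ = 0 → q₁ = q₈ → 0 < q₁ → q₄ ≠ q₆ →
      iteratedDeriv 3 h 0 < iteratedDeriv 3 g 0 ∧
      ∃ ε > (0 : ℝ), ∀ r ∈ Set.Ioo (0 : ℝ) ε, h r < g r) := by
  have hgap : ∀ k ≠ 0, iteratedDeriv k g 0 - iteratedDeriv k h 0 = jetGap (J4 * Q) Nmat k := by
    rw [funext hg, funext hh]
    exact fun k hk => iteratedDeriv_sigma2_sub_sigma1_sq_zero _ _ hk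
  have hgap1 := hgap 1 one_ne_zero
  have hgap2 := hgap 2 two_ne_zero
  rw [hQ, jetGap_one] at hgap1
  rw [hQ, jetGap_two] at hgap2
  refine ⟨by linarith, ⟨by nlinarith, ?_⟩, ?_⟩
  · rw [← sub_eq_zero, hgap2, neg_eq_zero,
      add_eq_zero_iff_of_nonneg (by positivity) (by positivity)]
    simp [sub_eq_zero, and_comm]
  · rintro rfl rfl hq₁ hq
    have hgap3 := hgap 3 three_ne_zero
    rw [hQ, jetGap_three] at hgap3
    have hlt : iteratedDeriv 3 h 0 < iteratedDeriv 3 g 0 := by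
      nlinarith [mul_pos hq₁ (sq_pos_of_ne_zero (sub_ne_zero.2 hq))]
    have hagree : ∀ k < 3, iteratedDeriv k h 0 = iteratedDeriv k g 0 := by
      intro k hk
      interval_cases k
      · simp [hg, hh, sigma2_Nmat]
      · linarith
      · linear_combination -hgap2
    have hgC : ContDiff ℝ 3 g := by rw [funext hg]; exact contDiff_sigma2_exp_smul_mul _ _
    have hhC : ContDiff ℝ 3 h := by rw [funext hh]; exact contDiff_sigma1_sq_exp_smul_mul _ _
    obtain ⟨ε, hε, hsub⟩ := mem_nhdsGT_iff_exists_Ioo_subset.1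
      (eventually_lt_of_iteratedDeriv_lt hhC hgC hagree hlt)
    exact ⟨hlt, ε, hε, fun r hr => hsub hr⟩
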